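/- Let k ≥ 3 and ρ_k = log(k-1)/(k-1). If u = (u_1,...,u_k) ∈ ℝ^k satisfies Σ_j u_j = 0 and -1 ≤ u_j ≤ k-1 for all j, then Σ_j h(u_j) ≥ ρ_k Σ_j u_j², where h(t) = (1+t)log(1+t) - t. -/

import Mathlib

/-!
Write `K = k - 1`, `ρ = log K / K` and `f t = h t - ρ t²`; the claim is `∑ⱼ f (uⱼ) ≥ 0`.
Since `ρ ≤ 1/2`, `f` is convex on `[-1, 0]`, and `f 0 = 0`. Let `b` be the sum of the nonnegative
coordinates. There are at most `K` negative coordinates, so Jensen's inequality (padding them with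
zeros to `K` points) gives them total at least `K f (-b/K)`. Every nonnegative coordinate `p`
satisfies the two-point inequality `f p + K f (-p/K) ≥ 0`, and `f` is superadditive on `[-1, 0]`,
so the nonnegative coordinates contribute at least `-K f (-b/K)`.
The two-point inequality is one-variable calculus: `h t + K h (-t/K) - (log K / (K - 1)) t²` is
convex, then concave, then convex on `[0, K]`, and has double zeros at `0` and `K - 1`.
-/

noncomputable def h (t : ℝ) : ℝ := (1 + t) * Real.log (1 + t) - t

open Real Set Finset

lemma two_mul_mul_log_le_sq_sub_one {x : ℝ} (hx : 1 ≤ x) : 2 * x * log x ≤ x ^ 2 - 1 := by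
  have hx0 : 0 < x := by linarith
  have hsinh : log x ≤ (x - x⁻¹) / 2 :=
    sinh_log hx0 ▸ self_le_sinh_iff.mpr (log_nonneg hx)
  have : x * log x ≤ x * ((x - x⁻¹) / 2) := mul_le_mul_of_nonneg_left hsinh hx0.le
  field_simp at this
  linarith

@[fun_prop]
lemma continuous_h : Continuous h := by
  unfold h; fun_prop

lemma hasDerivAt_log_one_add {t : ℝ} (ht : -1 < t) :
    HasDerivAt (fun s ↦ log (1 + s)) (1 + t)⁻¹ t := by
  simpa using ((hasDerivAt_id' t).const_add 1).log (by linarith)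

lemma hasDerivAt_h {t : ℝ} (ht : -1 < t) : HasDerivAt h (log (1 + t)) t := by
  have hne : 1 + t ≠ 0 := by linarith
  refine ((((hasDerivAt_id' t).const_add 1).mul (hasDerivAt_log_one_add ht)).sub
    (hasDerivAt_id' t)).congr_deriv ?_
  field_simp
  ring

lemma convexOn_Icc_of_hasDerivAt2 {f f' f'' : ℝ → ℝ} {a b : ℝ} (hf : ContinuousOn f (Icc a b))
    (hf' : ∀ x ∈ Ioo a b, HasDerivAt f (f' x) x) (hf'' : ∀ x ∈ Ioo a b, HasDerivAt f' (f'' x) x)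
    (hf''₀ : ∀ x ∈ Ioo a b, 0 ≤ f'' x) : ConvexOn ℝ (Icc a b) f :=
  convexOn_of_hasDerivWithinAt2_nonneg (convex_Icc a b) hf
    (by rw [interior_Icc]; exact fun x hx ↦ (hf' x hx).hasDerivWithinAt)
    (by rw [interior_Icc]; exact fun x hx ↦ (hf'' x hx).hasDerivWithinAt)
    (by rwa [interior_Icc])

lemma concaveOn_Icc_of_hasDerivAt2 {f f' f'' : ℝ → ℝ} {a b : ℝ} (hf : ContinuousOn f (Icc a b))
    (hf' : ∀ x ∈ Ioo a b, HasDerivAt f (f' x) x) (hf'' : ∀ x ∈ Ioo a b, HasDerivAt f' (f'' x) x)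
    (hf''₀ : ∀ x ∈ Ioo a b, f'' x ≤ 0) : ConcaveOn ℝ (Icc a b) f :=
  concaveOn_of_hasDerivWithinAt2_nonpos (convex_Icc a b) hf
    (by rw [interior_Icc]; exact fun x hx ↦ (hf' x hx).hasDerivWithinAt)
    (by rw [interior_Icc]; exact fun x hx ↦ (hf'' x hx).hasDerivWithinAt)
    (by rwa [interior_Icc])

namespace ConvexOn

variable {S : Set ℝ} {f : ℝ → ℝ}

lemma isMinOn_of_hasDerivAt_eq_zero {x : ℝ} (hf : ConvexOn ℝ S f) (hx : x ∈ S)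
    (hf' : HasDerivAt f 0 x) : IsMinOn f S x := by
  refine isMinOn_iff.mpr fun y hy ↦ ?_
  rcases lt_trichotomy x y with hxy | rfl | hyx
  · have := hf.le_slope_of_hasDerivAt hx hy hxy hf'
    rw [slope_def_field, le_div_iff₀ (sub_pos.mpr hxy)] at this
    linarith
  · exact le_rfl
  · have := hf.slope_le_of_hasDerivAt hy hx hyx hf'
    rw [slope_def_field, div_le_iff₀ (sub_pos.mpr hyx)] at this
    linarith

variable (hf : ConvexOn ℝ S f) (h0 : (0 : ℝ) ∈ S) (hf0 : f 0 = 0)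
include hf h0 hf0

lemma map_mul_le_mul {a x : ℝ} (hx : x ∈ S) (ha₀ : 0 ≤ a) (ha₁ : a ≤ 1) :
    f (a * x) ≤ a * f x := by
  simpa [hf0] using hf.2 hx h0 ha₀ (sub_nonneg.mpr ha₁) (add_sub_cancel a 1)

lemma sum_map_le_map_sum {ι : Type*} {t : Finset ι} {x : ι → ℝ} (hx : ∀ i ∈ t, x i ≤ 0)
    (hsum : ∑ i ∈ t, x i ∈ S) : ∑ i ∈ t, f (x i) ≤ f (∑ i ∈ t, x i) := by
  set X := ∑ i ∈ t, x i
  rcases (sum_nonpos hx).eq_or_lt with hX | hX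
  · have hzero := (sum_eq_zero_iff_of_nonpos hx).mp hX
    rw [show X = 0 from hX, hf0, sum_eq_zero fun i hi ↦ by rw [hzero i hi, hf0]]
  -- each `x i` is the fraction `x i / X` of the total `X`
  have hfrac : ∀ i ∈ t, f (x i) ≤ x i / X * f X := fun i hi ↦ by
    have hXi : X ≤ x i := by
      simpa using single_le_sum (f := fun j ↦ -x j) (fun j hj ↦ neg_nonneg.mpr (hx j hj)) hi
    have := hf.map_mul_le_mul h0 hf0 hsum (div_nonneg_of_nonpos (hx i hi) hX.le)
      ((div_le_one_of_neg hX).mpr hXi)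
    rwa [div_mul_cancel₀ _ hX.ne] at this
  calc ∑ i ∈ t, f (x i) ≤ ∑ i ∈ t, x i / X * f X := sum_le_sum hfrac
    _ = f X := by rw [← sum_mul, ← sum_div, div_self hX.ne, one_mul]

lemma mul_map_sum_div_le_sum_map {ι : Type*} {t : Finset ι} {x : ι → ℝ} {K : ℝ}
    (hx : ∀ i ∈ t, x i ∈ S) (hK : (#t : ℝ) ≤ K) :
    K * f ((∑ i ∈ t, x i) / K) ≤ ∑ i ∈ t, f (x i) := by
  rcases t.eq_empty_or_nonempty with rfl | ht
  · simp [hf0]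
  set m : ℝ := ((#t : ℕ) : ℝ)
  have hm : 0 < m := by simpa [m] using ht.card_pos
  have hK0 : 0 < K := hm.trans_le hK
  have hw : ∑ _i ∈ t, m⁻¹ = 1 := by simp [m, hm.ne']
  have hmean : (∑ i ∈ t, x i) / m ∈ S := by
    simpa [← mul_sum, div_eq_inv_mul] using hf.1.sum_mem (fun _ _ ↦ by positivity) hw hx
  have jensen : f ((∑ i ∈ t, x i) / m) ≤ m⁻¹ * ∑ i ∈ t, f (x i) := by
    simpa [← mul_sum, div_eq_inv_mul] using hf.map_sum_le (fun _ _ ↦ by positivity) hw hx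
  -- padding with `K - m` zeros: the mean over `K` points is the fraction `m / K` of the mean
  have hpad : f ((∑ i ∈ t, x i) / K) ≤ m / K * f ((∑ i ∈ t, x i) / m) := by
    have := hf.map_mul_le_mul h0 hf0 hmean (by positivity) ((div_le_one hK0).mpr hK)
    rwa [show m / K * ((∑ i ∈ t, x i) / m) = (∑ i ∈ t, x i) / K by field_simp] at this
  calc K * f ((∑ i ∈ t, x i) / K) ≤ K * (m / K * (m⁻¹ * ∑ i ∈ t, f (x i))) := by
        gcongr
        exact hpad.trans (by gcongr)
    _ = ∑ i ∈ t, f (x i) := by field_simp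

end ConvexOn

lemma nonneg_of_convexOn_concaveOn_convexOn {f : ℝ → ℝ} {a b c d e : ℝ}
    (hab : a ≤ b) (hbc : b ≤ c) (hcd : c ≤ d) (hde : d ≤ e)
    (hconv₁ : ConvexOn ℝ (Icc a b) f) (hconc : ConcaveOn ℝ (Icc b c) f)
    (hconv₂ : ConvexOn ℝ (Icc c e) f)
    (ha : f a = 0) (ha' : HasDerivAt f 0 a) (hd : f d = 0) (hd' : HasDerivAt f 0 d) :
    ∀ t ∈ Icc a e, 0 ≤ f t := by
  have left : ∀ t ∈ Icc a b, 0 ≤ f t := fun t ht ↦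
    ha ▸ isMinOn_iff.mp (hconv₁.isMinOn_of_hasDerivAt_eq_zero ⟨le_rfl, hab⟩ ha') t ht
  have right : ∀ t ∈ Icc c e, 0 ≤ f t := fun t ht ↦
    hd ▸ isMinOn_iff.mp (hconv₂.isMinOn_of_hasDerivAt_eq_zero ⟨hcd, hde⟩ hd') t ht
  rintro t ⟨hat, hte⟩
  rcases le_total t b with htb | hbt
  · exact left t ⟨hat, htb⟩
  rcases le_total t c with htc | hct
  · exact (le_min (left b ⟨hab, le_rfl⟩) (right c ⟨le_rfl, hcd.trans hde⟩)).trans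
      (hconc.min_le_of_mem_Icc ⟨le_rfl, hbc⟩ ⟨hbc, le_rfl⟩ ⟨hbt, htc⟩)
  · exact right t ⟨hct, hte⟩

section Spread

variable {K : ℝ}

/-- `h t + K * h (-t / K)` is `∑ⱼ h (uⱼ)` at `u = (t, -t/K, …, -t/K)` with `K` entries `-t/K`;
the coefficient `log K / (K - 1)` makes `K - 1` a double zero. -/
noncomputable def spreadGap (K t : ℝ) : ℝ := h t + K * h (-t / K) - log K / (K - 1) * t ^ 2

lemma continuous_spreadGap : Continuous (spreadGap K) := by
  unfold spreadGap; fun_prop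

lemma hasDerivAt_spreadGap {t : ℝ} (hK : 0 < K) (ht : t ∈ Ioo (-1) K) :
    HasDerivAt (spreadGap K) (log (1 + t) - log (1 - t / K) - 2 * (log K / (K - 1)) * t) t := by
  have hneg : -1 < -t / K := by rw [lt_div_iff₀ hK]; linarith [ht.2]
  have := ((hasDerivAt_h ht.1).add
    (((hasDerivAt_h hneg).comp t ((hasDerivAt_id' t).neg.div_const K)).const_mul K)).sub
    ((hasDerivAt_pow 2 t).const_mul (log K / (K - 1)))
  refine this.congr_deriv ?_
  rw [neg_div, ← sub_eq_add_neg]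
  field_simp
  ring

lemma hasDerivAt_log_sub_log {t : ℝ} (hK : 0 < K) (ht : t ∈ Ioo (-1) K) :
    HasDerivAt (fun s ↦ log (1 + s) - log (1 - s / K)) ((K + 1) / ((1 + t) * (K - t))) t := by
  have hKt : 1 - t / K = (K - t) / K := by field_simp
  have hKt0 : 0 < K - t := sub_pos.mpr ht.2
  have h1t : 0 < 1 + t := by linarith [ht.1]
  have hin : HasDerivAt (fun s ↦ 1 - s / K) (-K⁻¹) t := by
    simpa using (hasDerivAt_id' t).div_const K |>.const_sub 1
  refine ((hasDerivAt_log_one_add ht.1).sub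
    (hin.log (by rw [hKt]; positivity))).congr_deriv ?_
  rw [hKt]
  field_simp
  ring

lemma spreadGap_zero : spreadGap K 0 = 0 := by
  simp [spreadGap, h]

lemma spreadGap_sub_one (hK : 1 < K) : spreadGap K (K - 1) = 0 := by
  have hK1 : K - 1 ≠ 0 := by linarith
  have : 1 + -(K - 1) / K = K⁻¹ := by field_simp; ring
  simp only [spreadGap, h, this, log_inv, add_sub_cancel]
  field_simp
  ring

lemma hasDerivAt_spreadGap_zero (hK : 0 < K) : HasDerivAt (spreadGap K) 0 0 := by
  simpa using hasDerivAt_spreadGap hK ⟨neg_one_lt_zero, hK⟩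

lemma hasDerivAt_spreadGap_sub_one (hK : 1 < K) : HasDerivAt (spreadGap K) 0 (K - 1) := by
  have hK1 : K - 1 ≠ 0 := by linarith
  convert hasDerivAt_spreadGap (by linarith) ⟨by linarith, sub_one_lt K⟩ using 1
  rw [show 1 - (K - 1) / K = K⁻¹ by field_simp; ring, log_inv, add_sub_cancel]
  field_simp
  ring

lemma convexOn_spreadGap {a b : ℝ} (hK : 0 < K) (ha : -1 ≤ a) (hb : b ≤ K)
    (hq : ∀ s ∈ Ioo a b, 2 * (log K / (K - 1)) * ((1 + s) * (K - s)) ≤ K + 1) :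
    ConvexOn ℝ (Icc a b) (spreadGap K) := by
  have hsub : ∀ s ∈ Ioo a b, s ∈ Ioo (-1) K := fun s hs ↦ ⟨ha.trans_lt hs.1, hs.2.trans_le hb⟩
  refine convexOn_Icc_of_hasDerivAt2 continuous_spreadGap.continuousOn
    (fun s hs ↦ hasDerivAt_spreadGap hK (hsub s hs))
    (fun s hs ↦ (hasDerivAt_log_sub_log hK (hsub s hs)).sub
      ((hasDerivAt_id' s).const_mul _)) fun s hs ↦ ?_
  have : 0 < (1 + s) * (K - s) :=
    mul_pos (by linarith [(hsub s hs).1]) (by linarith [(hsub s hs).2])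
  rw [mul_one, sub_nonneg, le_div_iff₀ this]
  exact hq s hs

lemma concaveOn_spreadGap {a b : ℝ} (hK : 0 < K) (ha : -1 ≤ a) (hb : b ≤ K)
    (hq : ∀ s ∈ Ioo a b, K + 1 ≤ 2 * (log K / (K - 1)) * ((1 + s) * (K - s))) :
    ConcaveOn ℝ (Icc a b) (spreadGap K) := by
  have hsub : ∀ s ∈ Ioo a b, s ∈ Ioo (-1) K := fun s hs ↦ ⟨ha.trans_lt hs.1, hs.2.trans_le hb⟩
  refine concaveOn_Icc_of_hasDerivAt2 continuous_spreadGap.continuousOn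
    (fun s hs ↦ hasDerivAt_spreadGap hK (hsub s hs))
    (fun s hs ↦ (hasDerivAt_log_sub_log hK (hsub s hs)).sub
      ((hasDerivAt_id' s).const_mul _)) fun s hs ↦ ?_
  have : 0 < (1 + s) * (K - s) :=
    mul_pos (by linarith [(hsub s hs).1]) (by linarith [(hsub s hs).2])
  rw [mul_one, sub_nonpos, div_le_iff₀ this]
  exact hq s hs

-- `spreadGap K` has second derivative `(K + 1) / ((1 + s) * (K - s)) - 2 * log K / (K - 1)`,
-- so `D` is the half-width of its interval of concavity, centred at `(K - 1) / 2`.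
lemma exists_concavity_radius (hK : 1 < K) : ∃ D, 0 ≤ D ∧ D ≤ (K - 1) / 2 ∧
    (∀ s, D ≤ |s - (K - 1) / 2| → 2 * (log K / (K - 1)) * ((1 + s) * (K - s)) ≤ K + 1) ∧
    (∀ s, |s - (K - 1) / 2| < D → K + 1 ≤ 2 * (log K / (K - 1)) * ((1 + s) * (K - s))) := by
  set B := log K / (K - 1)
  have hB0 : 0 < B := div_pos (log_pos hK) (by linarith)
  set c := (K - 1) / 2 with hc
  set Δ := ((K + 1) / 2) ^ 2 - (K + 1) / (2 * B) with hΔ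
  have hq : ∀ s, 2 * B * ((1 + s) * (K - s)) = K + 1 + 2 * B * (Δ - (s - c) ^ 2) := by
    intro s
    rw [hΔ, hc]
    field_simp
    ring
  have hD0 : 0 ≤ √Δ := sqrt_nonneg Δ
  refine ⟨√Δ, hD0, ?_, fun s hs ↦ ?_, fun s hs ↦ ?_⟩
  · have h2 : 2 * B * K ≤ K + 1 := by
      have := two_mul_mul_log_le_sq_sub_one hK.le
      rw [show 2 * B * K = 2 * K * log K / (K - 1) by ring, div_le_iff₀ (by linarith)]
      nlinarith
    have : K ≤ (K + 1) / (2 * B) := by rw [le_div_iff₀ (by positivity)]; linarith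
    refine (sqrt_le_left (by linarith)).mpr ?_
    rw [hΔ, hc]
    nlinarith
  · have : Δ ≤ (s - c) ^ 2 := calc
      Δ ≤ max Δ 0 := le_max_left _ _
      _ = √Δ ^ 2 := (sq_sqrt' ..).symm
      _ ≤ (s - c) ^ 2 := sq_le_sq.mpr (by rwa [abs_of_nonneg hD0])
    rw [hq]
    nlinarith
  · have : (s - c) ^ 2 < max Δ 0 := by
      rw [← sq_sqrt']
      exact sq_lt_sq.mpr (by rwa [abs_of_nonneg hD0])
    have : (s - c) ^ 2 < Δ := by
      rcases lt_max_iff.mp this with hΔ | h0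
      · exact hΔ
      · nlinarith [sq_nonneg (s - c)]
    rw [hq]
    nlinarith

lemma spreadGap_nonneg {t : ℝ} (hK : 1 < K) (ht : t ∈ Icc 0 K) : 0 ≤ spreadGap K t := by
  have hK0 : 0 < K := by linarith
  obtain ⟨D, hD0, hDc, hout, hin⟩ := exists_concavity_radius hK
  set c := (K - 1) / 2 with hc
  exact nonneg_of_convexOn_concaveOn_convexOn (b := c - D) (c := c + D) (d := K - 1)
    (by linarith) (by linarith) (by linarith) (sub_one_lt K).le
    (convexOn_spreadGap hK0 (by norm_num) (by linarith) fun s hs ↦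
      hout s (by rw [abs_sub_comm, abs_of_nonneg] <;> linarith [hs.2]))
    (concaveOn_spreadGap hK0 (by linarith) (by linarith) fun s hs ↦
      hin s (abs_sub_lt_iff.mpr ⟨by linarith [hs.2], by linarith [hs.1]⟩))
    (convexOn_spreadGap hK0 (by linarith) le_rfl fun s hs ↦
      hout s (by rw [abs_of_nonneg] <;> linarith [hs.1]))
    spreadGap_zero (hasDerivAt_spreadGap_zero hK0) (spreadGap_sub_one hK)
    (hasDerivAt_spreadGap_sub_one hK) t ht

end Spread

noncomputable def hExcess (ρ t : ℝ) : ℝ := h t - ρ * t ^ 2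

lemma hExcess_zero (ρ : ℝ) : hExcess ρ 0 = 0 := by
  simp [hExcess, h]

lemma convexOn_hExcess {ρ : ℝ} (hρ : 2 * ρ ≤ 1) : ConvexOn ℝ (Icc (-1) 0) (hExcess ρ) := by
  refine convexOn_Icc_of_hasDerivAt2 (f' := fun t ↦ log (1 + t) - 2 * ρ * t)
    (show Continuous (hExcess ρ) by unfold hExcess; fun_prop).continuousOn
    (fun t ht ↦ ((hasDerivAt_h ht.1).sub ((hasDerivAt_pow 2 t).const_mul ρ)).congr_deriv
      (by simp; ring))
    (fun t ht ↦ (hasDerivAt_log_one_add ht.1).sub ((hasDerivAt_id' t).const_mul (2 * ρ)))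
    fun t ht ↦ ?_
  have : 1 ≤ (1 + t)⁻¹ := one_le_inv₀ (by linarith [ht.1]) |>.mpr (by linarith [ht.2])
  linarith

lemma hExcess_add_mul_hExcess_neg_div_nonneg {K p : ℝ} (hK : 1 < K) (hp : p ∈ Icc 0 K) :
    0 ≤ hExcess (log K / K) p + K * hExcess (log K / K) (-p / K) := by
  have hK0 : 0 < K := by linarith
  have hK1 : 0 < K - 1 := by linarith
  have hcoef : 0 ≤ log K / (K - 1) - log K / K * (1 + 1 / K) := by
    rw [show log K / (K - 1) - log K / K * (1 + 1 / K) = log K / (K ^ 2 * (K - 1)) by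
      field_simp; ring]
    exact div_nonneg (log_nonneg hK.le) (by positivity)
  have : hExcess (log K / K) p + K * hExcess (log K / K) (-p / K)
      = spreadGap K p + (log K / (K - 1) - log K / K * (1 + 1 / K)) * p ^ 2 := by
    simp only [hExcess, spreadGap]
    field_simp
    ring
  rw [this]
  exact add_nonneg (spreadGap_nonneg hK hp) (mul_nonneg hcoef (sq_nonneg p))

lemma two_mul_log_div_self_le_one {x : ℝ} (hx : 1 ≤ x) : 2 * (log x / x) ≤ 1 := by
  have := two_mul_mul_log_le_sq_sub_one hx
  rw [← mul_div_assoc, div_le_one (by linarith)]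
  nlinarith

lemma neg_mul_hExcess_le_sum_hExcess {ι : Type*} {t : Finset ι} {p : ι → ℝ} {K : ℝ}
    (hK : 1 < K) (hp : ∀ i ∈ t, p i ∈ Set.Icc 0 K) (hsum : ∑ i ∈ t, p i ≤ K) :
    -(K * hExcess (log K / K) (-(∑ i ∈ t, p i) / K)) ≤ ∑ i ∈ t, hExcess (log K / K) (p i) := by
  have hK0 : 0 < K := by linarith
  have hf := convexOn_hExcess (two_mul_log_div_self_le_one hK.le)
  have hsuper := hf.sum_map_le_map_sum ⟨by norm_num, le_rfl⟩ (hExcess_zero _) (t := t)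
    (x := fun i ↦ -p i / K)
    (fun i hi ↦ div_nonpos_of_nonpos_of_nonneg (neg_nonpos.mpr (hp i hi).1) hK0.le)
    (by
      rw [← sum_div, sum_neg_distrib]
      exact ⟨by rw [le_div_iff₀ hK0]; linarith,
        div_nonpos_of_nonpos_of_nonneg (neg_nonpos.mpr (sum_nonneg fun i hi ↦ (hp i hi).1))
          hK0.le⟩)
  rw [← sum_div, sum_neg_distrib] at hsuper
  calc -(K * hExcess (log K / K) (-(∑ i ∈ t, p i) / K))
      ≤ -(K * ∑ i ∈ t, hExcess (log K / K) (-p i / K)) := by gcongr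
    _ = ∑ i ∈ t, -(K * hExcess (log K / K) (-p i / K)) := by rw [mul_sum, sum_neg_distrib]
    _ ≤ ∑ i ∈ t, hExcess (log K / K) (p i) := sum_le_sum fun i hi ↦ by
      linarith [hExcess_add_mul_hExcess_neg_div_nonneg hK (hp i hi)]

lemma card_filter_neg_lt_card {ι : Type*} [Fintype ι] [Nonempty ι] {u : ι → ℝ}
    (hsum : ∑ j, u j = 0) : #(univ.filter fun j ↦ ¬ 0 ≤ u j) < Fintype.card ι := by
  obtain ⟨j, -, hj⟩ := exists_le_of_sum_le univ_nonempty (f := 0) (g := u) (by simp [hsum])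
  exact card_lt_univ_of_notMem (x := j) (by simpa using hj)

theorem sum_hExcess_nonneg {ι : Type*} [Fintype ι] {K : ℝ} (hK : 1 < K)
    (hcard : (Fintype.card ι : ℝ) ≤ K + 1) {u : ι → ℝ} (hsum : ∑ j, u j = 0)
    (hlb : ∀ j, -1 ≤ u j) (hub : ∀ j, u j ≤ K) :
    0 ≤ ∑ j, hExcess (log K / K) (u j) := by
  classical
  have hK0 : 0 < K := by linarith
  set P := univ.filter fun j ↦ 0 ≤ u j
  set N := univ.filter fun j ↦ ¬ 0 ≤ u j
  have hNsum : ∑ j ∈ N, u j = -∑ j ∈ P, u j := by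
    linarith [sum_filter_add_sum_filter_not univ (fun j ↦ 0 ≤ u j) u]
  have hNcard : (#N : ℝ) ≤ K := by
    rcases isEmpty_or_nonempty ι with hι | hι
    · simp [N, hK0.le]
    have : (#N : ℝ) + 1 ≤ Fintype.card ι := by exact_mod_cast card_filter_neg_lt_card hsum
    linarith
  have hPsum : ∑ j ∈ P, u j ≤ K := by
    have : ∑ j ∈ N, -u j ≤ ∑ j ∈ N, 1 := sum_le_sum fun j _ ↦ by linarith [hlb j]
    rw [sum_neg_distrib, hNsum, sum_const, nsmul_one] at this
    linarith
  have hneg := (convexOn_hExcess (two_mul_log_div_self_le_one hK.le)).mul_map_sum_div_le_sum_map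
    ⟨by norm_num, le_rfl⟩ (hExcess_zero _)
    (fun j hj ↦ ⟨hlb j, (not_le.mp (mem_filter.mp hj).2).le⟩) hNcard
  have hpos := neg_mul_hExcess_le_sum_hExcess hK
    (fun j hj ↦ ⟨(mem_filter.mp hj).2, hub j⟩) hPsum
  rw [hNsum] at hneg
  rw [← sum_filter_add_sum_filter_not univ (fun j ↦ 0 ≤ u j)]
  linarith

theorem h_ineq (k : ℕ) (hk : 3 ≤ k) (u : Fin k → ℝ)
    (hsum : ∑ j, u j = 0) (hlb : ∀ j, -1 ≤ u j) (hub : ∀ j, u j ≤ (k : ℝ) - 1) :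
    (Real.log ((k : ℝ) - 1) / ((k : ℝ) - 1)) * ∑ j, (u j) ^ 2 ≤ ∑ j, h (u j) := by
  have hK : 1 < (k : ℝ) - 1 := by
    have : (3 : ℝ) ≤ k := by exact_mod_cast hk
    linarith
  have := sum_hExcess_nonneg hK (by simp) hsum hlb hub
  simp only [hExcess, sum_sub_distrib, ← mul_sum] at this
  linarith
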